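/- Bound on the correction term: with the notation of the star-graph Li-Yau inequality, the term I_i(x,t) satisfies 0 ≤ I_i(x,t) ≤ (x²/t²)·(∫₀^∞ g(x−y,t)φ_i(y)dy)/(2α_i·P_tφ(x)) ≤ (x²/t²)·(4πt)^{-1/2}·‖φ_i‖_{L¹(ℝ⁺)}/(2α_i·P_tφ(x)). -/
import Mathlib


open Real MeasureTheory Finset

/-- The one-dimensional heat kernel. -/
noncomputable def heatKernel (z t : ℝ) : ℝ :=
  (4 * Real.pi * t) ^ (-(1/2) : ℝ) * Real.exp (-z ^ 2 / (4 * t))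

/-- The star-graph heat kernel `Γ_i(x,y,t)` for `y` on edge `j`. -/
noncomputable def starKernel {N : ℕ} (α : Fin N → ℝ) (i j : Fin N) (x y t : ℝ) : ℝ :=
  if j = i then heatKernel (x - y) t + (2 * α i - 1) * heatKernel (x + y) t
  else 2 * α j * heatKernel (x + y) t

/-- The star-graph heat semigroup `P_tφ(x)` for `x` on edge `i`. -/
noncomputable def starSemigroup {N : ℕ} (α : Fin N → ℝ) (φ : Fin N → ℝ → ℝ)
    (i : Fin N) (x t : ℝ) : ℝ :=
  ∑ j : Fin N, ∫ y in Set.Ioi (0 : ℝ), starKernel α i j x y t * φ j y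

/-- The correction term `I_i(x,t)` in the Li-Yau inequality. -/
noncomputable def correctionTerm {N : ℕ} (α : Fin N → ℝ) (φ : Fin N → ℝ → ℝ)
    (i : Fin N) (x t : ℝ) : ℝ :=
  1 / (4 * t ^ 2 * starSemigroup α φ i x t) *
    ∫ y in Set.Ioi (0 : ℝ),
      (|x + y| - |x - y|) ^ 2 *
        (heatKernel (x - y) t * heatKernel (x + y) t
          / (heatKernel (x - y) t + (2 * α i - 1) * heatKernel (x + y) t)) * φ i y

lemma heatKernel_pos {z t : ℝ} (ht : 0 < t) : 0 < heatKernel z t := by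
  unfold heatKernel
  have h4 : 0 < 4 * Real.pi * t := by positivity
  positivity

lemma heatKernel_le {z t : ℝ} (ht : 0 < t) :
    heatKernel z t ≤ (4 * Real.pi * t) ^ (-(1/2) : ℝ) := by
  unfold heatKernel
  have h4 : (0:ℝ) < 4 * Real.pi * t := by positivity
  have he : Real.exp (-z ^ 2 / (4 * t)) ≤ 1 := by
    apply Real.exp_le_one_iff.mpr
    have : (0:ℝ) ≤ z ^ 2 / (4 * t) := by positivity
    linarith [neg_div (4*t) (z^2)]
  nlinarith [Real.rpow_pos_of_pos h4 (-(1/2) : ℝ)]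

lemma heatKernel_add_le {x y t : ℝ} (hx : 0 ≤ x) (hy : 0 ≤ y) (ht : 0 < t) :
    heatKernel (x + y) t ≤ heatKernel (x - y) t := by
  unfold heatKernel
  have h4 : (0:ℝ) < 4 * Real.pi * t := by positivity
  have he : Real.exp (-(x + y) ^ 2 / (4 * t)) ≤ Real.exp (-(x - y) ^ 2 / (4 * t)) := by
    apply Real.exp_le_exp.mpr
    rw [div_le_div_iff₀ (by positivity) (by positivity)]
    nlinarith [mul_nonneg hx hy]
  nlinarith [Real.rpow_pos_of_pos h4 (-(1/2) : ℝ), Real.exp_pos (-(x + y) ^ 2 / (4 * t))]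

lemma heatKernel_continuous (x t : ℝ) : Continuous (fun y => heatKernel (x - y) t) := by
  unfold heatKernel
  fun_prop

/-- Bounds on the correction term `I_i(x,t)`. -/
theorem correctionTerm_bounds {N : ℕ} (α : Fin N → ℝ) (φ : Fin N → ℝ → ℝ)
    (i : Fin N) (hα : α i ∈ Set.Ioc (0 : ℝ) 1)
    (hφ : ∀ y, 0 ≤ φ i y) (hφint : IntegrableOn (φ i) (Set.Ioi 0))
    (x t : ℝ) (hx : 0 ≤ x) (ht : 0 < t)
    (hP : 0 < starSemigroup α φ i x t) :
    0 ≤ correctionTerm α φ i x t ∧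
      correctionTerm α φ i x t
        ≤ x ^ 2 / t ^ 2 *
            ((∫ y in Set.Ioi (0 : ℝ), heatKernel (x - y) t * φ i y)
              / (2 * α i * starSemigroup α φ i x t)) ∧
      x ^ 2 / t ^ 2 *
          ((∫ y in Set.Ioi (0 : ℝ), heatKernel (x - y) t * φ i y)
            / (2 * α i * starSemigroup α φ i x t))
        ≤ x ^ 2 / t ^ 2 *
            ((4 * Real.pi * t) ^ (-(1/2) : ℝ) * (∫ y in Set.Ioi (0 : ℝ), φ i y)
              / (2 * α i * starSemigroup α φ i x t)) := by
  obtain ⟨hα0, hα1⟩ := hα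
  set P := starSemigroup α φ i x t with hPdef
  -- positivity of the denominator
  have hD : ∀ y : ℝ, 0 ≤ y →
      2 * α i * heatKernel (x + y) t ≤
        heatKernel (x - y) t + (2 * α i - 1) * heatKernel (x + y) t := by
    intro y hy
    have h1 := heatKernel_add_le hx hy ht
    nlinarith
  have hDpos : ∀ y : ℝ, 0 ≤ y →
      0 < heatKernel (x - y) t + (2 * α i - 1) * heatKernel (x + y) t := by
    intro y hy
    have := hD y hy
    have h2 := heatKernel_pos (z := x + y) ht
    nlinarith
  -- pointwise nonnegativity of the integrand
  have hF_nonneg : ∀ y ∈ Set.Ioi (0:ℝ), 0 ≤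
      (|x + y| - |x - y|) ^ 2 *
        (heatKernel (x - y) t * heatKernel (x + y) t
          / (heatKernel (x - y) t + (2 * α i - 1) * heatKernel (x + y) t)) * φ i y := by
    intro y hy
    have hd := hDpos y (le_of_lt hy)
    have h1 := heatKernel_pos (z := x - y) ht
    have h2 := heatKernel_pos (z := x + y) ht
    have h3 := hφ y
    positivity
  -- absolute value bound
  have hA : ∀ y : ℝ, 0 ≤ y → (|x + y| - |x - y|) ^ 2 ≤ 4 * x ^ 2 := by
    intro y hy
    rw [abs_of_nonneg (by linarith)]
    rcases abs_cases (x - y) with ⟨h, _⟩ | ⟨h, _⟩ <;> rw [h] <;> nlinarith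
  -- measurability / integrability
  have hcont := heatKernel_continuous x t
  have hmeas : AEStronglyMeasurable (fun y => heatKernel (x - y) t * φ i y)
      (volume.restrict (Set.Ioi (0:ℝ))) :=
    (hcont.aestronglyMeasurable.restrict).mul hφint.aestronglyMeasurable
  have hint1 : IntegrableOn (fun y => heatKernel (x - y) t * φ i y) (Set.Ioi 0) := by
    apply Integrable.mono' (hφint.const_mul ((4 * Real.pi * t) ^ (-(1/2) : ℝ))) hmeas
    filter_upwards [ae_restrict_mem measurableSet_Ioi] with y hy
    rw [Real.norm_eq_abs, abs_of_nonneg (mul_nonneg (le_of_lt (heatKernel_pos ht)) (hφ y))]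
    exact mul_le_mul_of_nonneg_right (heatKernel_le ht) (hφ y)
  -- part 1
  have part1 : 0 ≤ correctionTerm α φ i x t := by
    unfold correctionTerm
    rw [← hPdef]
    exact mul_nonneg (by positivity) (setIntegral_nonneg measurableSet_Ioi hF_nonneg)
  refine ⟨part1, ?_, ?_⟩
  · -- part 2
    have hbound : ∀ y ∈ Set.Ioi (0:ℝ),
        (|x + y| - |x - y|) ^ 2 *
          (heatKernel (x - y) t * heatKernel (x + y) t
            / (heatKernel (x - y) t + (2 * α i - 1) * heatKernel (x + y) t)) * φ i y
          ≤ (4 * x ^ 2 / (2 * α i)) * (heatKernel (x - y) t * φ i y) := by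
      intro y hy
      have hy' : (0:ℝ) ≤ y := le_of_lt hy
      have hd := hDpos y hy'
      have hd2 := hD y hy'
      have h1 := heatKernel_pos (z := x - y) ht
      have h2 := heatKernel_pos (z := x + y) ht
      have hq : heatKernel (x - y) t * heatKernel (x + y) t
          / (heatKernel (x - y) t + (2 * α i - 1) * heatKernel (x + y) t)
          ≤ heatKernel (x - y) t / (2 * α i) := by
        rw [div_le_div_iff₀ hd (by positivity)]
        nlinarith
      calc (|x + y| - |x - y|) ^ 2 *
          (heatKernel (x - y) t * heatKernel (x + y) t
            / (heatKernel (x - y) t + (2 * α i - 1) * heatKernel (x + y) t)) * φ i y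
          ≤ (4 * x ^ 2) * (heatKernel (x - y) t / (2 * α i)) * φ i y := by
            apply mul_le_mul_of_nonneg_right _ (hφ y)
            exact mul_le_mul (hA y hy') hq (by positivity) (by positivity)
        _ = (4 * x ^ 2 / (2 * α i)) * (heatKernel (x - y) t * φ i y) := by ring
    have hint2 : ∫ y in Set.Ioi (0:ℝ),
        (|x + y| - |x - y|) ^ 2 *
          (heatKernel (x - y) t * heatKernel (x + y) t
            / (heatKernel (x - y) t + (2 * α i - 1) * heatKernel (x + y) t)) * φ i y
        ≤ (4 * x ^ 2 / (2 * α i)) *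
            ∫ y in Set.Ioi (0:ℝ), heatKernel (x - y) t * φ i y := by
      rw [← integral_const_mul]
      apply integral_mono_of_nonneg
      · filter_upwards [ae_restrict_mem measurableSet_Ioi] with y hy using hF_nonneg y hy
      · exact hint1.const_mul _
      · filter_upwards [ae_restrict_mem measurableSet_Ioi] with y hy using hbound y hy
    unfold correctionTerm
    rw [← hPdef]
    calc 1 / (4 * t ^ 2 * P) * ∫ y in Set.Ioi (0:ℝ),
          (|x + y| - |x - y|) ^ 2 *
            (heatKernel (x - y) t * heatKernel (x + y) t
              / (heatKernel (x - y) t + (2 * α i - 1) * heatKernel (x + y) t)) * φ i y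
        ≤ 1 / (4 * t ^ 2 * P) * ((4 * x ^ 2 / (2 * α i)) *
            ∫ y in Set.Ioi (0:ℝ), heatKernel (x - y) t * φ i y) :=
          mul_le_mul_of_nonneg_left hint2 (by positivity)
      _ = x ^ 2 / t ^ 2 *
            ((∫ y in Set.Ioi (0 : ℝ), heatKernel (x - y) t * φ i y) / (2 * α i * P)) := by
          field_simp
  · -- part 3
    have hJ : (∫ y in Set.Ioi (0:ℝ), heatKernel (x - y) t * φ i y)
        ≤ (4 * Real.pi * t) ^ (-(1/2) : ℝ) * ∫ y in Set.Ioi (0:ℝ), φ i y := by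
      rw [← integral_const_mul]
      apply integral_mono_of_nonneg
      · filter_upwards [ae_restrict_mem measurableSet_Ioi] with y _ using
          mul_nonneg (le_of_lt (heatKernel_pos ht)) (hφ y)
      · exact hφint.const_mul _
      · filter_upwards [ae_restrict_mem measurableSet_Ioi] with y _ using
          mul_le_mul_of_nonneg_right (heatKernel_le ht) (hφ y)
    gcongr
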